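/- With $\Phi$ as above ($\Phi(r)=e^{ar^{\alpha}}/(r^{2\kappa+2}-\rho^{2\kappa+2})$, $a=8(\kappa+1)/\alpha$), there is $r_0=r_0(\kappa_0,\epsilon)>0$ such that for all $0\le\rho<r<r_0$ with $\rho/r\le 1/\sqrt{2}$, $\frac{1+r^{\alpha}}{1-r^{\alpha}}\Phi'(r)+\frac{2(\kappa+1)r^{2\kappa+1}}{r^{2\kappa+2}-\rho^{2\kappa+2}}\Phi(r)\ge 0$. -/

import Mathlib

/-!
The logarithmic derivative of `Φ` is `aα r^(α-1) - (2κ+2) r^(2κ+1) / D` with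
`D = r^(2κ+2) - ρ^(2κ+2)`. Put `x = r^α` and `q = r^(2κ+2) / D`; the hypothesis `ρ/r ≤ 1/√2`
gives `ρ^(2κ+2) ≤ r^(2κ+2)/2`, i.e. `q ≤ 2`. Since `aα = 8(κ+1)`, the expression equals
`2(κ+1) Φ(r) / r · ((1+x)/(1-x) (4x - q) + q) = 2(κ+1) Φ(r) / r · 2x (2(1+x) - q) / (1-x)`,
which is nonnegative as soon as `x < 1`; so `r0 = 1` works, uniformly in `κ0` and `ε`.
-/

noncomputable def Phi (a α κ ρ : ℝ) (r : ℝ) : ℝ :=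
  Real.exp (a * r ^ α) / (r ^ (2 * κ + 2) - ρ ^ (2 * κ + 2))

open Real

lemma rpow_le_half_rpow_of_div_le_inv_sqrt_two {ρ r p : ℝ} (hρ : 0 ≤ ρ) (hr : 0 < r)
    (hp : 2 ≤ p) (h : ρ / r ≤ 1 / √2) : ρ ^ p ≤ r ^ p / 2 := by
  have h_inv_sqrt_two_le_one : 1 / √2 ≤ 1 := by
    rw [div_le_one (by positivity)]
    exact one_le_sqrt.mpr one_le_two
  have hq : (ρ / r) ^ p ≤ 1 / 2 := calc
    (ρ / r) ^ p ≤ (ρ / r) ^ (2 : ℝ) :=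
      rpow_le_rpow_of_exponent_ge' (by positivity) (h.trans h_inv_sqrt_two_le_one) zero_le_two hp
    _ ≤ (1 / √2) ^ (2 : ℝ) := rpow_le_rpow (by positivity) h zero_le_two
    _ = 1 / 2 := by rw [rpow_two, div_pow, sq_sqrt zero_le_two]; norm_num
  rw [div_rpow hρ hr.le, div_le_iff₀ (rpow_pos_of_pos hr p)] at hq
  linarith

lemma hasDerivAt_Phi {a α κ ρ r : ℝ} (hr : 0 < r)
    (hD : r ^ (2 * κ + 2) - ρ ^ (2 * κ + 2) ≠ 0) :
    HasDerivAt (Phi a α κ ρ) (Phi a α κ ρ r * (a * α * r ^ (α - 1)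
      - (2 * κ + 2) * r ^ (2 * κ + 1) / (r ^ (2 * κ + 2) - ρ ^ (2 * κ + 2)))) r := by
  have hnum := ((hasDerivAt_rpow_const (p := α) (Or.inl hr.ne')).const_mul a).exp
  have hden := (hasDerivAt_rpow_const (p := 2 * κ + 2) (Or.inl hr.ne')).sub_const (ρ ^ (2 * κ + 2))
  refine (hnum.div hden hD).congr_deriv ?_
  rw [show 2 * κ + 2 - 1 = 2 * κ + 1 by ring, Phi]
  generalize r ^ (2 * κ + 2) - ρ ^ (2 * κ + 2) = D at hD ⊢
  field_simp

lemma deriv_Phi_combination_eq {α κ ρ r : ℝ} (hα : α ≠ 0) (hr : 0 < r)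
    (hD : r ^ (2 * κ + 2) - ρ ^ (2 * κ + 2) ≠ 0) (hx : r ^ α ≠ 1) :
    (1 + r ^ α) / (1 - r ^ α) * deriv (Phi (8 * (κ + 1) / α) α κ ρ) r
        + 2 * (κ + 1) * r ^ (2 * κ + 1) / (r ^ (2 * κ + 2) - ρ ^ (2 * κ + 2)) *
          Phi (8 * (κ + 1) / α) α κ ρ r
      = 2 * (κ + 1) / r * Phi (8 * (κ + 1) / α) α κ ρ r *
          ((1 + r ^ α) / (1 - r ^ α) * (4 * r ^ α - r ^ (2 * κ + 2) / (r ^ (2 * κ + 2) - ρ ^ (2 * κ + 2)))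
            + r ^ (2 * κ + 2) / (r ^ (2 * κ + 2) - ρ ^ (2 * κ + 2))) := by
  have hpow : r ^ (2 * κ + 1) = r ^ (2 * κ + 2) / r := by
    rw [eq_div_iff hr.ne', ← rpow_add_one hr.ne']
    ring_nf
  have hx' : 1 - r ^ α ≠ 0 := sub_ne_zero.mpr hx.symm
  rw [(hasDerivAt_Phi hr hD).deriv, rpow_sub_one hr.ne', hpow]
  generalize Phi (8 * (κ + 1) / α) α κ ρ r = P
  field_simp
  ring

lemma one_add_div_one_sub_mul_add_nonneg {x q : ℝ} (hx0 : 0 ≤ x) (hx1 : x < 1) (hq : q ≤ 2) :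
    0 ≤ (1 + x) / (1 - x) * (4 * x - q) + q := by
  have h1x : 0 < 1 - x := sub_pos.mpr hx1
  rw [show (1 + x) / (1 - x) * (4 * x - q) + q = 2 * x * (2 * (1 + x) - q) / (1 - x) by
    field_simp; ring]
  have : 0 ≤ 2 * (1 + x) - q := by linarith
  positivity

theorem stmt_2_general (κ0 ε : ℝ) (hε : 0 < ε) :
    ∃ r0 : ℝ, 0 < r0 ∧
      ∀ κ α ρ : ℝ, ε ≤ α → α < 1 → 0 < κ → κ < κ0 → 0 ≤ ρ →
        ∀ r : ℝ, ρ < r → r < r0 → ρ / r ≤ 1 / Real.sqrt 2 →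
          0 ≤ (1 + r ^ α) / (1 - r ^ α) * deriv (Phi (8 * (κ + 1) / α) α κ ρ) r
              + 2 * (κ + 1) * r ^ (2 * κ + 1) / (r ^ (2 * κ + 2) - ρ ^ (2 * κ + 2)) *
                Phi (8 * (κ + 1) / α) α κ ρ r := by
  refine ⟨1, one_pos, fun κ α ρ hεα hα1 hκ _ hρ r hρr hr1 hratio => ?_⟩
  have hα : 0 < α := hε.trans_le hεα
  have hr : 0 < r := hρ.trans_lt hρr
  have hρp : ρ ^ (2 * κ + 2) ≤ r ^ (2 * κ + 2) / 2 :=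
    rpow_le_half_rpow_of_div_le_inv_sqrt_two hρ hr (by linarith) hratio
  have hD : 0 < r ^ (2 * κ + 2) - ρ ^ (2 * κ + 2) := by
    linarith [rpow_pos_of_pos hr (2 * κ + 2)]
  have hx1 : r ^ α < 1 := rpow_lt_one hr.le hr1 hα
  have hq : r ^ (2 * κ + 2) / (r ^ (2 * κ + 2) - ρ ^ (2 * κ + 2)) ≤ 2 := by
    rw [div_le_iff₀ hD]
    linarith
  have hPhi : 0 < Phi (8 * (κ + 1) / α) α κ ρ r := div_pos (exp_pos _) hD
  rw [deriv_Phi_combination_eq hα.ne' hr hD.ne' hx1.ne]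
  exact mul_nonneg (by positivity)
    (one_add_div_one_sub_mul_add_nonneg (rpow_nonneg hr.le α) hx1 hq)

/-- There is `r0 = r0(κ0, ε) > 0` such that for all `0 ≤ ρ < r < r0` with `ρ/r ≤ 1/√2`,
`((1+r^α)/(1-r^α)) Φ'(r) + (2(κ+1) r^{2κ+1}/(r^{2κ+2}-ρ^{2κ+2})) Φ(r) ≥ 0`,
where `a = 8(κ+1)/α`. -/
theorem stmt_2 (κ0 ε : ℝ) (hκ0 : 2 < κ0) (hε : 0 < ε) :
    ∃ r0 : ℝ, 0 < r0 ∧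
      ∀ κ α ρ : ℝ, ε ≤ α → α < 1 → 0 < κ → κ < κ0 → 0 ≤ ρ →
        ∀ r : ℝ, ρ < r → r < r0 → ρ / r ≤ 1 / Real.sqrt 2 →
          0 ≤ (1 + r ^ α) / (1 - r ^ α) * deriv (Phi (8 * (κ + 1) / α) α κ ρ) r
              + 2 * (κ + 1) * r ^ (2 * κ + 1) / (r ^ (2 * κ + 2) - ρ ^ (2 * κ + 2)) *
                Phi (8 * (κ + 1) / α) α κ ρ r :=
  stmt_2_general κ0 ε hε
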